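/- Let P ∈ ℂ[x] be a polynomial of degree n ≥ 1 that is real on the imaginary axis with P(it) > 0 for every t ∈ ℝ, and suppose that the polynomial x ↦ P(2x − 1) belongs to M and that 1/P(2x−1) has a good approximation. Then the regular bimodule 𝒜(P) is not unitarizable: no invariant Hermitian form on 𝒜(P) is positive definite. -/

import Mathlib

open Polynomial
open scoped Classical

noncomputable section

abbrev FA : Type := FreeAlgebra ℂ (Fin 3)

def Egen : FA := FreeAlgebra.ι ℂ 0
def Fgen : FA := FreeAlgebra.ι ℂ 1
def Hgen : FA := FreeAlgebra.ι ℂ 2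

/-- The defining relations of the deformation `𝒜(P)` of the type A Kleinian singularity:
`he − eh = 2e`, `hf − fh = −2f`, `ef = P(h−1)`, `fe = P(h+1)`. -/
inductive ARel (P : ℂ[X]) : FA → FA → Prop
  | he : ARel P (Hgen * Egen - Egen * Hgen) (2 * Egen)
  | hf : ARel P (Hgen * Fgen - Fgen * Hgen) (-(2 * Fgen))
  | ef : ARel P (Egen * Fgen) (Polynomial.aeval (Hgen - 1) P)
  | fe : ARel P (Fgen * Egen) (Polynomial.aeval (Hgen + 1) P)

/-- The algebra `𝒜(P)`. -/
abbrev AP (P : ℂ[X]) : Type := RingQuot (ARel P)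

def eA (P : ℂ[X]) : AP P := RingQuot.mkAlgHom ℂ (ARel P) Egen
def fA (P : ℂ[X]) : AP P := RingQuot.mkAlgHom ℂ (ARel P) Fgen
def hA (P : ℂ[X]) : AP P := RingQuot.mkAlgHom ℂ (ARel P) Hgen

/-- `P` is real on the imaginary axis: `P(it) ∈ ℝ` for all real `t`. -/
def RealOnIm (P : ℂ[X]) : Prop := ∀ t : ℝ, ∃ r : ℝ, P.eval (Complex.I * t) = r

/-- An invariant Hermitian (sesquilinear) form on the regular bimodule `𝒜(P)`. -/
structure InvForm (P : ℂ[X]) where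
  B : AP P → AP P → ℂ
  add_left : ∀ u v w, B (u + v) w = B u w + B v w
  smul_left : ∀ (c : ℂ) (u v), B (c • u) v = c * B u v
  conj_symm : ∀ u v, B u v = starRingEnd ℂ (B v u)
  e_left : ∀ u v, B (eA P * u) v = - B u (v * fA P)
  h_left : ∀ u v, B (hA P * u) v = - B u (v * hA P)
  f_left : ∀ u v, B (fA P * u) v = - B u (v * eA P)
  e_right : ∀ u v, B (u * eA P) v = - B u (fA P * v)
  h_right : ∀ u v, B (u * hA P) v = - B u (hA P * v)
  f_right : ∀ u v, B (u * fA P) v = - B u (eA P * v)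

/-- The regular bimodule `𝒜(P)` is unitarizable: there is a positive definite
invariant Hermitian form on it. -/
def Unitarizable (P : ℂ[X]) : Prop :=
  ∃ Φ : InvForm P, ∀ u : AP P, u ≠ 0 → ∃ r : ℝ, 0 < r ∧ Φ.B u u = r


/-- The set `M` of nonzero polynomials that are real and nonnegative on the line
`Re x = 1/2`. -/
def MM : Set ℂ[X] :=
  {G | G ≠ 0 ∧ ∀ x : ℂ, x.re = 1 / 2 → ∃ r : ℝ, 0 ≤ r ∧ G.eval x = (r : ℂ)}

/-- `G` has `a`-bounded argument: `G(x) ≠ 0` and `arg G(x) ∈ (−a, a)` for all `x` on the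
imaginary axis. -/
def BoundedArg (G : ℂ[X]) (a : ℝ) : Prop :=
  ∀ x : ℂ, x.re = 0 → G.eval x ≠ 0 ∧ |(G.eval x).arg| < a

/-- `G` has `ε`-small argument: `arg G(x) ∈ (−ε, ε)` for all `x` on the imaginary axis with
`|x| < 1/ε`. -/
def SmallArg (G : ℂ[X]) (ε : ℝ) : Prop :=
  ∀ x : ℂ, x.re = 0 → ‖x‖ < 1 / ε → |(G.eval x).arg| < ε

/-- `1/G` has a good approximation: there is `0 < a < π/2` such that for every `ε > 0` there
is `F ∈ M` for which `G·F` has `a`-bounded `ε`-small argument. -/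
def GoodApprox (G : ℂ[X]) : Prop :=
  ∃ a : ℝ, 0 < a ∧ a < Real.pi / 2 ∧
    ∀ ε : ℝ, 0 < ε →
      ∃ F ∈ MM, BoundedArg (G * F) a ∧ SmallArg (G * F) ε


/-!
Suppose `Φ` is a positive definite invariant form and consider the functional
`W ↦ Φ(W(h), 1)` on `ℂ[x]`. With `Wᵟ(x) = conj (W (-conj x))` (`reflConj W`), invariance
under `h` gives `Φ(Q(h), Q(h)) = Φ((Q Qᵟ)(h), 1) ≥ 0`, while invariance under `e`, together
with `e S(h) = S(h - 2) e` and `ef = P(h - 1)`, gives `Φ((P(x-1) S(x-2) Sᵟ)(h), 1) ≤ 0`.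

Take the approximant `F ∈ M` for which `G F` has bounded argument, `G = P(2x - 1)`. As `F` is
nonnegative on `Re x = 1/2`, `F(x/2) = S(x - 2) Sᵟ(x)` for some `S`, so `W = P(x-1) S(x-2) Sᵟ`
equals `(G F)(x/2)`, whose real part on the imaginary axis is at least some `c > 0`. Then
`W + Wᵟ - 2c` is nonnegative on the imaginary axis, hence of the form `Q Qᵟ` (a real polynomial
nonnegative on `ℝ` is a sum of two squares), and the functional is both `≥ 0` and
`≤ -2c Φ(1, 1) < 0` on it. Here `Φ(1, 1) > 0` because `𝒜(P) ≠ 0`, as a representation on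
`ℤ → ℂ` shows.
-/

open Complex ComplexConjugate

namespace Polynomial

lemma eval_nonneg_of_eval_mul_nonneg {d q : ℝ[X]} {r : ℝ} (hdq : ∀ s, 0 ≤ (d * q).eval s)
    (hd : ∀ s ≠ r, 0 < d.eval s) (s : ℝ) : 0 ≤ q.eval s := by
  have hoff : {r}ᶜ ⊆ {s | 0 ≤ q.eval s} := fun s hs =>
    nonneg_of_mul_nonneg_right (by simpa using hdq s) (hd s hs)
  have hclosed : IsClosed {s | 0 ≤ q.eval s} := isClosed_le continuous_const q.continuous
  have := hclosed.closure_subset_iff.2 hoff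
  rw [(dense_compl_singleton r).closure_eq] at this
  exact this (Set.mem_univ s)

lemma sq_dvd_of_isRoot_of_nonneg {p : ℝ[X]} (hp : ∀ s, 0 ≤ p.eval s) (hp0 : p ≠ 0) {r : ℝ}
    (hr : p.IsRoot r) : (X - C r) ^ 2 ∣ p := by
  have hmin : IsLocalMin (fun s => p.eval s) r :=
    Filter.Eventually.of_forall fun s => by simpa [hr.eq_zero] using hp s
  have hderiv : p.derivative.IsRoot r := by
    simpa [Polynomial.deriv] using hmin.deriv_eq_zero
  rw [← le_rootMultiplicity_iff hp0]
  exact (one_lt_rootMultiplicity_iff_isRoot hp0).2 ⟨hr, hderiv⟩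

lemma exists_sq_add_sq_dvd_of_nonneg {p : ℝ[X]} (hp : ∀ s, 0 ≤ p.eval s)
    (hdeg : 0 < p.natDegree) :
    ∃ a b q : ℝ[X], ∃ r : ℝ, p = (a ^ 2 + b ^ 2) * q ∧ 0 < (a ^ 2 + b ^ 2).natDegree ∧
      ∀ s ≠ r, 0 < (a ^ 2 + b ^ 2).eval s := by
  have hp0 : p ≠ 0 := by rintro rfl; simp at hdeg
  obtain ⟨z, hz⟩ := Complex.exists_root (f := p.map (algebraMap ℝ ℂ))
    (by rwa [degree_map, ← natDegree_pos_iff_degree_pos])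
  rcases eq_or_ne z.im 0 with him | him
  · obtain ⟨r, rfl⟩ : ∃ r : ℝ, z = r := ⟨z.re, Complex.ext rfl him⟩
    obtain ⟨q, hq⟩ :=
      sq_dvd_of_isRoot_of_nonneg hp hp0 ((isRoot_map_iff (algebraMap ℝ ℂ).injective).1 hz)
    refine ⟨X - C r, 0, q, r, by simpa using hq, by simp [natDegree_pow], fun s hs => ?_⟩
    have : s - r ≠ 0 := sub_ne_zero.2 hs
    simp only [eval_add, eval_pow, eval_sub, eval_X, eval_C, eval_zero]
    positivity
  · obtain ⟨q, hq⟩ :=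
      quadratic_dvd_of_aeval_eq_zero_im_ne_zero p (by rwa [aeval_def, ← eval_map]) him
    have hquad : (X ^ 2 - C (2 * z.re) * X + C (‖z‖ ^ 2) : ℝ[X]) =
        (X - C z.re) ^ 2 + C z.im ^ 2 := by
      rw [Complex.sq_norm, Complex.normSq_apply]
      simp only [C_add, C_mul, map_ofNat]
      ring
    have hdeg2 : (X ^ 2 - C (2 * z.re) * X + C (‖z‖ ^ 2) : ℝ[X]).natDegree = 2 := by
      compute_degree!
    refine ⟨X - C z.re, C z.im, q, 0, by rw [hq, hquad], by rw [← hquad, hdeg2]; norm_num,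
      fun s _ => ?_⟩
    simp only [eval_add, eval_pow, eval_sub, eval_X, eval_C]
    positivity

theorem exists_eq_sq_add_sq_of_nonneg {p : ℝ[X]} (hp : ∀ s, 0 ≤ p.eval s) :
    ∃ a b : ℝ[X], p = a ^ 2 + b ^ 2 := by
  induction hn : p.natDegree using Nat.strong_induction_on generalizing p with
  | _ n ih =>
  rcases Nat.eq_zero_or_pos n with rfl | hpos
  · rw [eq_C_of_natDegree_eq_zero hn] at hp ⊢
    refine ⟨C √(p.coeff 0), 0, ?_⟩
    rw [← C_pow, Real.sq_sqrt (by simpa using hp 0)]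
    ring
  obtain ⟨a, b, q, r, rfl, hdeg, hd⟩ := exists_sq_add_sq_dvd_of_nonneg hp (hn ▸ hpos)
  have hd0 : a ^ 2 + b ^ 2 ≠ 0 := by rintro h; simp [h] at hdeg
  have hq0 : q ≠ 0 := by rintro rfl; simp at hn; omega
  obtain ⟨c, e, rfl⟩ := ih q.natDegree (by rw [← hn, natDegree_mul hd0 hq0]; omega)
    (eval_nonneg_of_eval_mul_nonneg hp hd) rfl
  exact ⟨a * c - b * e, a * e + b * c, by ring⟩

lemma eval_map_conj_ofReal (T : ℂ[X]) (s : ℝ) :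
    (T.map (starRingEnd ℂ)).eval (s : ℂ) = conj (T.eval (s : ℂ)) := by
  rw [eval_map, ← eval₂_at_apply, conj_ofReal]

theorem exists_eq_mul_map_conj_of_nonneg {T : ℂ[X]}
    (hT : ∀ s : ℝ, ∃ r : ℝ, 0 ≤ r ∧ T.eval (s : ℂ) = r) :
    ∃ A : ℂ[X], T = A * A.map (starRingEnd ℂ) := by
  have hconj : T.map (starRingEnd ℂ) = T := by
    refine eq_of_infinite_eval_eq _ _
      ((Set.infinite_range_of_injective ofReal_injective).mono ?_)
    rintro _ ⟨s, rfl⟩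
    obtain ⟨r, -, hr⟩ := hT s
    simp [eval_map_conj_ofReal, hr]
  obtain ⟨p, rfl⟩ := (mem_lifts (f := ofRealHom) T).1 <|
    (lifts_iff_coeff_lifts T).2 fun n => by
      obtain ⟨r, hr⟩ := conj_eq_iff_real.1
        (by rw [← coeff_map, hconj] : conj (T.coeff n) = T.coeff n)
      exact ⟨r, hr.symm⟩
  have hp : ∀ s, 0 ≤ p.eval s := fun s => by
    obtain ⟨r, hr, hpr⟩ := hT s
    have : ((p.eval s : ℝ) : ℂ) = r := by
      rw [← hpr, eval_map]
      exact (eval₂_at_apply ofRealHom s).symm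
    exact ofReal_inj.1 this ▸ hr
  obtain ⟨a, b, rfl⟩ := exists_eq_sq_add_sq_of_nonneg hp
  have hreal (q : ℝ[X]) : (q.map ofRealHom).map (starRingEnd ℂ) = q.map ofRealHom := by
    rw [map_map]; congr 1; ext; simp
  refine ⟨a.map ofRealHom + C I * b.map ofRealHom, ?_⟩
  have hI : (C I) ^ 2 = -1 := by rw [← C_pow, I_sq, C_neg, C_1]
  simp only [Polynomial.map_add, Polynomial.map_mul, Polynomial.map_pow, map_C, hreal, conj_I,
    C_neg]
  linear_combination (b.map ofRealHom) ^ 2 * hI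

end Polynomial

def reflConj : ℂ[X] →+* ℂ[X] := (compRingHom (-X)).comp (mapRingHom (starRingEnd ℂ))

lemma reflConj_apply (S : ℂ[X]) : reflConj S = (S.map (starRingEnd ℂ)).comp (-X) := rfl

lemma eval_reflConj_I_mul (S : ℂ[X]) (s : ℝ) :
    (reflConj S).eval (I * s) = conj (S.eval (I * s)) := by
  rw [reflConj_apply, eval_comp, eval_neg, eval_X, eval_map, ← eval₂_at_apply]
  simp

theorem exists_eq_mul_reflConj_of_nonneg {V : ℂ[X]}
    (hV : ∀ s : ℝ, ∃ r : ℝ, 0 ≤ r ∧ V.eval (I * s) = r) :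
    ∃ Q : ℂ[X], V = Q * reflConj Q := by
  obtain ⟨A, hA⟩ := exists_eq_mul_map_conj_of_nonneg (T := V.comp (C I * X)) (by simpa using hV)
  refine ⟨A.comp (C (-I) * X), ?_⟩
  have hVcomp : V = (V.comp (C I * X)).comp (C (-I) * X) := by
    rw [comp_assoc, mul_comp, C_comp, X_comp, ← mul_assoc, ← C_mul]
    simp
  rw [hVcomp, hA, mul_comp, reflConj_apply, Polynomial.map_comp, comp_assoc]
  congr 2
  simp [mul_comp]

theorem exists_comp_eq_mul_reflConj_of_mem_MM {F : ℂ[X]} (hF : F ∈ MM) :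
    ∃ S : ℂ[X], F.comp (C 2⁻¹ * X) = S.comp (X - 2) * reflConj S := by
  obtain ⟨Q, hQ⟩ := exists_eq_mul_reflConj_of_nonneg (V := F.comp (C 2⁻¹ * (X + 1)))
    fun s => by simpa using hF.2 (2⁻¹ * (I * s + 1)) (by simp)
  refine ⟨Q.comp (X + 1), ?_⟩
  have hF : F.comp (C 2⁻¹ * X) = (F.comp (C 2⁻¹ * (X + 1))).comp (X - 1) := by
    simp [comp_assoc, mul_comp]
  have hshift : (Q.comp (X + 1)).comp (X - 2) = Q.comp (X - 1) := by
    rw [comp_assoc]; congr 1; simp; ring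
  have hrefl : reflConj (Q.comp (X + 1)) = (reflConj Q).comp (X - 1) := by
    rw [reflConj_apply, reflConj_apply, Polynomial.map_comp, comp_assoc, comp_assoc]
    congr 1; simp; ring
  rw [hF, hQ, mul_comp, hshift, hrefl]

lemma exists_pos_le_norm_eval_I_mul {W : ℂ[X]} (hW : ∀ s : ℝ, W.eval (I * s) ≠ 0) :
    ∃ c > 0, ∀ s : ℝ, c ≤ ‖W.eval (I * s)‖ := by
  by_cases hdeg : 0 < W.degree
  · have hlim : Filter.Tendsto (fun s : ℝ => ‖W.eval (I * s)‖) (Filter.cocompact ℝ)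
        Filter.atTop :=
      W.tendsto_norm_atTop hdeg
        (by simpa only [norm_mul, norm_I, one_mul, norm_real] using tendsto_norm_cocompact_atTop)
    obtain ⟨s₀, hs₀⟩ :=
      (by fun_prop : Continuous fun s : ℝ => ‖W.eval (I * s)‖).exists_forall_le hlim
    exact ⟨_, norm_pos_iff.2 (hW s₀), hs₀⟩
  · rw [eq_C_of_degree_le_zero (not_lt.1 hdeg)] at hW ⊢
    exact ⟨_, norm_pos_iff.2 (by simpa using hW 0), fun s => by simp⟩

lemma cos_mul_norm_le_re {z : ℂ} {a : ℝ} (ha : a ≤ Real.pi) (harg : |arg z| ≤ a) :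
    Real.cos a * ‖z‖ ≤ z.re := by
  rw [← norm_mul_cos_arg, mul_comm, ← Real.cos_abs (arg z)]
  exact mul_le_mul_of_nonneg_left
    (Real.cos_le_cos_of_nonneg_of_le_pi (abs_nonneg _) ha harg) (norm_nonneg z)

lemma BoundedArg.exists_pos_le_re {G : ℂ[X]} {a : ℝ} (hG : BoundedArg G a)
    (ha : a < Real.pi / 2) : ∃ c > 0, ∀ s : ℝ, c ≤ (G.eval (I * s)).re := by
  have haxis (s : ℝ) := hG (I * s) (by simp)
  obtain ⟨c, hc, hle⟩ := exists_pos_le_norm_eval_I_mul fun s => (haxis s).1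
  have hcos : 0 < Real.cos a :=
    Real.cos_pos_of_mem_Ioo ⟨by linarith [(abs_nonneg _).trans_lt (haxis 0).2, Real.pi_pos], ha⟩
  refine ⟨Real.cos a * c, mul_pos hcos hc, fun s => ?_⟩
  calc Real.cos a * c ≤ Real.cos a * ‖G.eval (I * s)‖ :=
        mul_le_mul_of_nonneg_left (hle s) hcos.le
    _ ≤ _ := cos_mul_norm_le_re (by linarith [Real.pi_pos]) (haxis s).2.le

def weightRep (P : ℂ[X]) : FA →ₐ[ℂ] Module.End ℂ (ℤ → ℂ) :=
  FreeAlgebra.lift ℂ ![LinearMap.funLeft ℂ ℂ (· - 1),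
    Algebra.lmul ℂ (ℤ → ℂ) (fun k => P.eval (2 * k + 1)) *
      LinearMap.funLeft ℂ ℂ (· + 1),
    Algebra.lmul ℂ (ℤ → ℂ) (fun k => 2 * k)]

lemma weightRep_aeval_Hgen_add (P S : ℂ[X]) (c : ℂ) (v : ℤ → ℂ) (k : ℤ) :
    weightRep P (aeval (Hgen + algebraMap ℂ FA c) S) v k = S.eval (2 * k + c) * v k := by
  have hH : weightRep P (Hgen + algebraMap ℂ FA c) =
      Algebra.lmul ℂ (ℤ → ℂ) (fun k => 2 * k + c) := by
    ext v k
    simp [weightRep, Hgen, Algebra.algebraMap_eq_smul_one]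
    ring
  rw [← aeval_algHom_apply, hH, aeval_algHom_apply]
  simp

lemma weightRep_rel (P : ℂ[X]) ⦃x y : FA⦄ (h : ARel P x y) :
    weightRep P x = weightRep P y := by
  cases h with
  | he => ext v k; simp [weightRep, Egen, Hgen, map_ofNat]; ring
  | hf => ext v k; simp [weightRep, Fgen, Hgen, map_ofNat]; ring
  | ef =>
    ext v k
    rw [sub_eq_add_neg, ← map_one (algebraMap ℂ FA), ← map_neg, weightRep_aeval_Hgen_add]
    simp [weightRep, Egen, Fgen]
    left; ring_nf
  | fe =>
    ext v k
    rw [← map_one (algebraMap ℂ FA), weightRep_aeval_Hgen_add]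
    simp [weightRep, Egen, Fgen]

instance (P : ℂ[X]) : Nontrivial (AP P) :=
  (RingQuot.liftAlgHom ℂ ⟨weightRep P, weightRep_rel P⟩).toRingHom.domain_nontrivial

lemma SemiconjBy.aeval {R A : Type*} [CommSemiring R] [Semiring A] [Algebra R A] {a x y : A}
    (h : SemiconjBy a x y) (S : R[X]) : SemiconjBy a (aeval x S) (aeval y S) := by
  induction S using Polynomial.induction_on' with
  | add p q hp hq => simpa using hp.add_right hq
  | monomial n c => simpa [aeval_monomial] using
      SemiconjBy.mul_right (Algebra.commute_algebraMap_right c a) (h.pow_right n)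

section Relations

variable (P : ℂ[X])

lemma eA_mul_hA : eA P * hA P = (hA P - 2) * eA P := by
  have h : hA P * eA P - eA P * hA P = 2 * eA P := by
    have := RingQuot.mkAlgHom_rel ℂ (ARel.he (P := P))
    simp only [map_sub, map_mul, map_ofNat] at this
    exact this
  rw [sub_mul, ← h]
  abel

lemma eA_mul_fA : eA P * fA P = aeval (hA P) (P.comp (X - 1)) := by
  have h := RingQuot.mkAlgHom_rel ℂ (ARel.ef (P := P))
  rw [map_mul, ← aeval_algHom_apply, map_sub, map_one] at h
  simp only [aeval_comp, map_sub, aeval_X, map_one]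
  exact h

lemma eA_mul_aeval_hA (S : ℂ[X]) :
    eA P * aeval (hA P) S = aeval (hA P) (S.comp (X - 2)) * eA P := by
  have h : aeval (hA P) (S.comp (X - 2)) = aeval (hA P - 2) S := by simp [aeval_comp, map_ofNat]
  exact h ▸ SemiconjBy.aeval (eA_mul_hA P) S

end Relations

namespace InvForm

variable {P : ℂ[X]} (Φ : InvForm P)

def IsPosDef : Prop := ∀ u : AP P, u ≠ 0 → ∃ r : ℝ, 0 < r ∧ Φ.B u u = r

lemma add_right (u v w : AP P) : Φ.B u (v + w) = Φ.B u v + Φ.B u w := by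
  rw [Φ.conj_symm, Φ.add_left, map_add, ← Φ.conj_symm, ← Φ.conj_symm]

lemma smul_right (c : ℂ) (u v : AP P) : Φ.B u (c • v) = conj c * Φ.B u v := by
  rw [Φ.conj_symm, Φ.smul_left, map_mul, ← Φ.conj_symm]

lemma neg_left (u v : AP P) : Φ.B (-u) v = -Φ.B u v := by
  rw [← neg_one_smul ℂ u, Φ.smul_left, neg_one_mul]

lemma sub_left (u v w : AP P) : Φ.B (u - v) w = Φ.B u w - Φ.B v w := by
  rw [sub_eq_add_neg, Φ.add_left, neg_left, sub_eq_add_neg]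

lemma mul_hA_right (u v : AP P) : Φ.B u (v * hA P) = -Φ.B (hA P * u) v := by
  rw [Φ.conj_symm, Φ.h_right, map_neg, ← Φ.conj_symm]

lemma mul_hA_pow_right (n : ℕ) (u v : AP P) :
    Φ.B u (v * hA P ^ n) = (-1) ^ n * Φ.B (hA P ^ n * u) v := by
  induction n generalizing u with
  | zero => simp
  | succ n ih =>
    rw [pow_succ, ← mul_assoc, mul_hA_right, ih]
    simp only [mul_assoc]
    ring

lemma mul_aeval_hA_right (S : ℂ[X]) (u v : AP P) :
    Φ.B u (v * aeval (hA P) S) = Φ.B (aeval (hA P) (reflConj S) * u) v := by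
  induction S using Polynomial.induction_on' with
  | add p q hp hq => simp only [map_add, mul_add, add_mul, add_right, Φ.add_left, hp, hq]
  | monomial n a =>
    have hrefl : reflConj (monomial n a) = monomial n (conj a * (-1) ^ n) := by
      simp only [reflConj_apply, ← C_mul_X_pow_eq_monomial, Polynomial.map_mul, map_C,
        Polynomial.map_pow, map_X, mul_comp, C_comp, pow_comp, X_comp, neg_pow (X : ℂ[X]), C_mul,
        C_pow, C_neg, C_1]
      ring
    simp only [hrefl, aeval_monomial, Algebra.algebraMap_eq_smul_one, smul_mul_assoc, one_mul,
      mul_smul_comm, smul_right, Φ.smul_left, mul_hA_pow_right]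
    ring

lemma aeval_mul_reflConj_one (Q : ℂ[X]) :
    Φ.B (aeval (hA P) (Q * reflConj Q)) 1 = Φ.B (aeval (hA P) Q) (aeval (hA P) Q) := by
  rw [← one_mul (aeval (hA P) Q), mul_aeval_hA_right, one_mul, ← map_mul, mul_comm]

lemma aeval_reflConj_one (W : ℂ[X]) :
    Φ.B (aeval (hA P) (reflConj W)) 1 = conj (Φ.B (aeval (hA P) W) 1) := by
  rw [← mul_one (aeval (hA P) (reflConj W)), ← mul_aeval_hA_right, one_mul, Φ.conj_symm]

lemma aeval_shift_mul_reflConj_one (S : ℂ[X]) :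
    Φ.B (aeval (hA P) (P.comp (X - 1) * S.comp (X - 2) * reflConj S)) 1 =
      -Φ.B (aeval (hA P) S * fA P) (aeval (hA P) S * fA P) := by
  have he : eA P * (aeval (hA P) S * fA P) =
      aeval (hA P) (S.comp (X - 2) * P.comp (X - 1)) := by
    rw [← mul_assoc, eA_mul_aeval_hA, mul_assoc, eA_mul_fA, map_mul]
  rw [← Φ.e_left, he, ← one_mul (aeval (hA P) S), mul_aeval_hA_right, ← map_mul,
    mul_comm, mul_comm (P.comp _)]

variable {Φ}

lemma IsPosDef.re_self_nonneg (hΦ : Φ.IsPosDef) (u : AP P) : 0 ≤ (Φ.B u u).re := by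
  rcases eq_or_ne u 0 with rfl | hu
  · simp [show Φ.B 0 0 = 0 by simpa using Φ.smul_left 0 0 0]
  · obtain ⟨r, hr, hru⟩ := hΦ u hu
    simpa [hru] using hr.le

theorem IsPosDef.exists_re_eval_lt (hΦ : Φ.IsPosDef) (S : ℂ[X]) {c : ℝ} (hc : 0 < c) :
    ∃ s : ℝ, ((P.comp (X - 1) * S.comp (X - 2) * reflConj S).eval (I * s)).re < c := by
  set W := P.comp (X - 1) * S.comp (X - 2) * reflConj S
  by_contra! hW
  have hV (s : ℝ) :
      ∃ r : ℝ, 0 ≤ r ∧ (W + reflConj W - C ((2 * c : ℝ) : ℂ)).eval (I * s) = r :=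
    ⟨2 * ((W.eval (I * s)).re - c), by linarith [hW s], by
      simp [eval_reflConj_I_mul, add_conj]; ring⟩
  obtain ⟨Q, hQ⟩ := exists_eq_mul_reflConj_of_nonneg hV
  obtain ⟨r, hr, hr1⟩ := hΦ 1 one_ne_zero
  have hpair := congrArg (fun V => (Φ.B (aeval (hA P) V) 1).re) hQ
  simp only [W, map_sub, map_add, Φ.sub_left, Φ.add_left, aeval_reflConj_one,
    aeval_shift_mul_reflConj_one, aeval_mul_reflConj_one, aeval_C, Algebra.algebraMap_eq_smul_one,
    Φ.smul_left, hr1, ← ofReal_mul, sub_re, add_re, conj_re, neg_re, ofReal_re] at hpair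
  nlinarith [hΦ.re_self_nonneg (aeval (hA P) Q), hΦ.re_self_nonneg (aeval (hA P) S * fA P),
    mul_pos hc hr]

end InvForm

theorem stmt16_general (P : ℂ[X])
    (hgood : GoodApprox (P.comp (2 * X - 1))) :
    ¬ Unitarizable P := by
  rintro ⟨Φ, hΦ⟩
  obtain ⟨a, -, ha, happrox⟩ := hgood
  obtain ⟨F, hF, hbdd, -⟩ := happrox 1 one_pos
  obtain ⟨c, hc, hle⟩ := hbdd.exists_pos_le_re ha
  obtain ⟨S, hS⟩ := exists_comp_eq_mul_reflConj_of_mem_MM hF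
  obtain ⟨s, hs⟩ := InvForm.IsPosDef.exists_re_eval_lt hΦ S hc
  have hW : P.comp (X - 1) * S.comp (X - 2) * reflConj S =
      (P.comp (2 * X - 1) * F).comp (C 2⁻¹ * X) := by
    rw [mul_comp, hS, comp_assoc, mul_assoc]
    congr 2
    have h2 : (2 : ℂ[X]) * C 2⁻¹ = 1 := by
      rw [← map_ofNat C 2, ← C_mul, mul_inv_cancel₀ two_ne_zero, C_1]
    simp [mul_comp, ← mul_assoc, h2]
  have hs2 : (C (2⁻¹ : ℂ) * X).eval (I * s) = I * ↑(s / 2) := by simp; ring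
  rw [hW, eval_comp, hs2] at hs
  exact hs.not_ge (hle (s / 2))

/-- if `P` (of degree `≥ 1`) is real and positive on the imaginary axis,
`P(2x−1) ∈ M`, and `1/P(2x−1)` has a good approximation, then the regular bimodule `𝒜(P)`
is not unitarizable. -/
theorem stmt16 (P : ℂ[X]) (hdeg : 1 ≤ P.natDegree)
    (hpos : ∀ t : ℝ, ∃ r : ℝ, 0 < r ∧ P.eval (Complex.I * t) = (r : ℂ))
    (hM : P.comp (2 * X - 1) ∈ MM)
    (hgood : GoodApprox (P.comp (2 * X - 1))) :
    ¬ Unitarizable P :=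
  stmt16_general P hgood

end
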